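/- One has lim_{t→1+} ξ(t) = 2/3 and lim_{t→1+} ξ'(t) = 8/135, where ξ' is the derivative of ξ on (1,∞). (Thus the holomorphic extension of ξ to a neighbourhood of 1 satisfies ξ(1) = 2/3 and ξ'(1) = 8/135.) -/

import Mathlib

/-!
Put `w = v - u`. Since `e^{-u} - e^{-v} = w` and `e^{-u} = e^{-v} e^w`, both roots are explicit
in `w`: `a = e^{-v} = w / (e^w - 1)` and `b = e^{-u} = a + w`. Differentiating the inverse branches
gives `ξ' = -(a / (1 - a)³ + b / (1 - b)³) = -ξ³ + ξ² + (3ξ - 2) / ((1 - a)(1 - b))`. Expanding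
`e^w` to fifth order, `ξ = 2/3 + w²/135 + O(w³)` and `(1 - a)(1 - b) = -w²/4 + O(w³)`, so as
`t → 1⁺` (i.e. `w → 0`) `ξ → 2/3` and `ξ' → -8/27 + 4/9 - 4/45 = 8/135`.
-/

open Filter Set Real Topology
open scoped Nat

noncomputable def expTail (n : ℕ) (x : ℝ) : ℝ :=
  (exp x - ∑ k ∈ Finset.range n, x ^ k / k !) / x ^ n

lemma exp_eq_sum_add_expTail (n : ℕ) {x : ℝ} (hx : x ≠ 0) :
    exp x = ∑ k ∈ Finset.range n, x ^ k / k ! + x ^ n * expTail n x := by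
  rw [expTail, mul_div_cancel₀ _ (pow_ne_zero n hx)]
  ring

lemma tendsto_expTail (n : ℕ) : Tendsto (expTail n) (𝓝[≠] 0) (𝓝 (1 / n !)) := by
  have h := (exp_sub_sum_range_succ_isLittleO_pow n).tendsto_div_nhds_zero.mono_left
    (nhdsWithin_le_nhds (s := {0}ᶜ))
  rw [← add_zero (1 / n ! : ℝ)]
  refine (h.const_add _).congr' ?_
  filter_upwards [self_mem_nhdsWithin] with x (hx : x ≠ 0)
  rw [expTail, Finset.sum_range_succ]
  field_simp
  ring

section RightInverse

variable {F g : ℝ → ℝ} {c : ℝ}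

lemma pos_of_rightInverse (hc : F 0 = c)
    (hg : ∀ t ≥ c, 0 ≤ g t ∧ F (g t) = t) {t : ℝ} (ht : c < t) : 0 < g t := by
  refine (hg t ht.le).1.lt_of_ne fun h => ht.ne ?_
  rw [← (hg t ht.le).2, ← h, hc]

lemma strictMonoOn_of_rightInverse (hF : StrictMonoOn F (Ici 0))
    (hg : ∀ t ≥ c, 0 ≤ g t ∧ F (g t) = t) : StrictMonoOn g (Ici c) := fun t₁ ht₁ t₂ ht₂ h =>
  (hF.lt_iff_lt (hg t₁ ht₁).1 (hg t₂ ht₂).1).1 (by rwa [(hg t₁ ht₁).2, (hg t₂ ht₂).2])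

lemma image_Ici_of_rightInverse (hF : StrictMonoOn F (Ici 0)) (hc : F 0 = c)
    (hg : ∀ t ≥ c, 0 ≤ g t ∧ F (g t) = t) : g '' Ici c = Ici 0 := by
  refine (image_subset_iff.2 fun t ht => (hg t ht).1).antisymm fun s (hs : 0 ≤ s) => ?_
  have hFs : c ≤ F s := hc ▸ hF.monotoneOn self_mem_Ici hs hs
  exact ⟨F s, hFs, hF.injOn (hg _ hFs).1 hs (hg _ hFs).2⟩

lemma continuousAt_of_rightInverse (hF : StrictMonoOn F (Ici 0)) (hc : F 0 = c)
    (hg : ∀ t ≥ c, 0 ≤ g t ∧ F (g t) = t) {t : ℝ} (ht : c < t) : ContinuousAt g t :=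
  (strictMonoOn_of_rightInverse hF hg).continuousAt_of_image_mem_nhds (Ici_mem_nhds ht)
    (image_Ici_of_rightInverse hF hc hg ▸ Ici_mem_nhds (pos_of_rightInverse hc hg ht))

lemma tendsto_nhdsGT_of_rightInverse (hF : StrictMonoOn F (Ici 0)) (hc : F 0 = c)
    (hg : ∀ t ≥ c, 0 ≤ g t ∧ F (g t) = t) : Tendsto g (𝓝[>] c) (𝓝 0) := by
  have hgc : g c = 0 := hF.injOn (hg c le_rfl).1 self_mem_Ici ((hg c le_rfl).2.trans hc.symm)
  have h := (strictMonoOn_of_rightInverse hF hg).continuousWithinAt_right_of_image_mem_nhdsWithin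
    self_mem_nhdsWithin (by rw [image_Ici_of_rightInverse hF hc hg, hgc]; exact self_mem_nhdsWithin)
  rw [← hgc]
  exact h.tendsto.mono_left (nhdsWithin_mono _ Ioi_subset_Ici_self)

end RightInverse

lemma neg_div_cube_add_div_cube_eq {a b : ℝ} (ha : 1 - a ≠ 0) (hb : 1 - b ≠ 0) :
    -(a / (1 - a) ^ 3 + b / (1 - b) ^ 3) =
      -(1 / (1 - a) + 1 / (1 - b)) ^ 3 + (1 / (1 - a) + 1 / (1 - b)) ^ 2 +
        3 * ((1 / (1 - a) + 1 / (1 - b) - 2 / 3) / ((1 - a) * (1 - b))) := by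
  field_simp
  ring

lemma tendsto_sum_inv_one_sub_of_tendsto_div {α : Type*} {l : Filter α} {a b : α → ℝ} {c : ℝ}
    (hne : ∀ᶠ i in l, (1 - a i) * (1 - b i) ≠ 0)
    (h0 : Tendsto (fun i => (1 - a i) * (1 - b i)) l (𝓝 0))
    (hc : Tendsto (fun i => (1 / (1 - a i) + 1 / (1 - b i) - 2 / 3) / ((1 - a i) * (1 - b i)))
      l (𝓝 c)) :
    Tendsto (fun i => 1 / (1 - a i) + 1 / (1 - b i)) l (𝓝 (2 / 3)) ∧
      Tendsto (fun i => -(a i / (1 - a i) ^ 3 + b i / (1 - b i) ^ 3)) l (𝓝 (4 / 27 + 3 * c)) := by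
  have hξ : Tendsto (fun i => 1 / (1 - a i) + 1 / (1 - b i)) l (𝓝 (2 / 3)) := by
    have := (hc.mul h0).const_add (2 / 3)
    rw [mul_zero, add_zero] at this
    refine this.congr' (hne.mono fun i hi => ?_)
    dsimp only
    rw [div_mul_cancel₀ _ hi]
    ring
  refine ⟨hξ, ?_⟩
  have := ((hξ.pow 3).neg.add (hξ.pow 2)).add (hc.const_mul 3)
  rw [show -(2 / 3 : ℝ) ^ 3 + (2 / 3) ^ 2 + 3 * c = 4 / 27 + 3 * c by norm_num] at this
  refine this.congr' (hne.mono fun i hi => ?_)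
  exact (neg_div_cube_add_div_cube_eq (left_ne_zero_of_mul hi) (right_ne_zero_of_mul hi)).symm

lemma hasDerivAt_exp_neg_add_self (x : ℝ) :
    HasDerivAt (fun s => exp (-s) + s) (1 - exp (-x)) x := by
  refine ((hasDerivAt_neg x).exp.add (hasDerivAt_id x)).congr_deriv ?_
  ring

lemma strictMonoOn_exp_neg_add_self : StrictMonoOn (fun s => exp (-s) + s) (Ici 0) := by
  refine strictMonoOn_of_deriv_pos (convex_Ici 0) (by fun_prop) fun x hx => ?_
  rw [interior_Ici] at hx
  rw [(hasDerivAt_exp_neg_add_self x).deriv, sub_pos, exp_lt_one_iff, neg_lt_zero]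
  exact hx

lemma strictMonoOn_exp_sub_self : StrictMonoOn (fun s => exp s - s) (Ici 0) := by
  refine strictMonoOn_of_deriv_pos (convex_Ici 0) (by fun_prop) fun x hx => ?_
  rw [interior_Ici] at hx
  rw [((hasDerivAt_exp x).fun_sub (hasDerivAt_id' x)).deriv, sub_pos, one_lt_exp_iff]
  exact hx

lemma nonnegRoot_tendsto_pos_continuousAt {v : ℝ → ℝ}
    (hv : ∀ t ≥ (1 : ℝ), 0 ≤ v t ∧ exp (-v t) + v t = t) :
    Tendsto v (𝓝[>] 1) (𝓝 0) ∧ ∀ t > 1, 0 < v t ∧ ContinuousAt v t := by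
  have hc : (fun s => exp (-s) + s) 0 = 1 := by simp
  exact ⟨tendsto_nhdsGT_of_rightInverse strictMonoOn_exp_neg_add_self hc hv, fun t ht =>
    ⟨pos_of_rightInverse (F := fun s => exp (-s) + s) hc hv ht,
      continuousAt_of_rightInverse strictMonoOn_exp_neg_add_self hc hv ht⟩⟩

lemma nonposRoot_tendsto_neg_continuousAt {u : ℝ → ℝ}
    (hu : ∀ t ≥ (1 : ℝ), u t ≤ 0 ∧ exp (-u t) + u t = t) :
    Tendsto u (𝓝[>] 1) (𝓝 0) ∧ ∀ t > 1, u t < 0 ∧ ContinuousAt u t := by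
  have hc : (fun s => exp s - s) 0 = 1 := by simp
  have hu' : ∀ t ≥ (1 : ℝ), 0 ≤ -u t ∧ (fun s => exp s - s) (-u t) = t := fun t ht =>
    ⟨neg_nonneg.2 (hu t ht).1, by simpa [sub_neg_eq_add] using (hu t ht).2⟩
  refine ⟨by simpa using (tendsto_nhdsGT_of_rightInverse strictMonoOn_exp_sub_self hc hu').neg,
    fun t ht => ⟨neg_pos.1 (pos_of_rightInverse (F := fun s => exp s - s) hc hu' ht), ?_⟩⟩
  simpa using (continuousAt_of_rightInverse (g := fun t => -u t) strictMonoOn_exp_sub_self hc hu'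
    ht).fun_neg

lemma hasDerivAt_one_div_one_sub_exp_neg {g : ℝ → ℝ} {t : ℝ} (hg : ContinuousAt g t)
    (h0 : g t ≠ 0) (hinv : ∀ᶠ y in 𝓝 t, exp (-g y) + g y = y) :
    HasDerivAt (fun y => 1 / (1 - exp (-g y))) (-(exp (-g t) / (1 - exp (-g t)) ^ 3)) t := by
  have hne : 1 - exp (-g t) ≠ 0 := by
    rw [sub_ne_zero, ne_comm, Ne, exp_eq_one_iff, neg_eq_zero]
    exact h0
  have hg' : HasDerivAt g (1 - exp (-g t))⁻¹ t :=
    .of_local_left_inverse hg (hasDerivAt_exp_neg_add_self (g t)) hne hinv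
  simp only [one_div]
  refine ((hg'.fun_neg.exp.const_sub 1).inv hne).congr_deriv ?_
  field_simp

noncomputable def bernoulliGen (w : ℝ) : ℝ := w / (exp w - 1)

noncomputable def xiRemainderPoly (w s : ℝ) : ℝ :=
  1 / 54 - 2 * s + w / 216 + w ^ 2 / 432 - w ^ 2 * s / 9 + w ^ 3 / 1728 + w ^ 4 * s / 36
    - 4 / 3 * w ^ 4 * s ^ 2 + 1 / 3 * w ^ 5 * s ^ 2

/- Here `s` is the Taylor tail `(e^w - 1 - w - ⋯ - w⁴/24) / w⁵ → 1/120`, and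
`xiRemainderPoly 0 (1/120) = 1/540`: together the identities say `ξ = 2/3 + w²/135 + O(w³)`. -/
lemma bernoulliGen_expansion {w s p q : ℝ} (hw : w ≠ 0)
    (hexp : exp w = 1 + w + w ^ 2 / 2 + w ^ 3 / 6 + w ^ 4 / 24 + w ^ 5 * s)
    (hp : p = 1 / 2 + w / 6 + w ^ 2 / 24 + w ^ 3 * s) (hq : q = 1 - (1 - w) * p) :
    (1 - bernoulliGen w) * (1 - (bernoulliGen w + w)) < 0 ∧
    (1 - bernoulliGen w) * (1 - (bernoulliGen w + w)) = -(w ^ 2 * p * q) / (1 + w * p) ^ 2 ∧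
    (1 / (1 - bernoulliGen w) + 1 / (1 - (bernoulliGen w + w)) - 2 / 3) /
        ((1 - bernoulliGen w) * (1 - (bernoulliGen w + w))) =
      -xiRemainderPoly w s * (1 + w * p) ^ 2 / (p * q) ^ 2 := by
  have hE : exp w = 1 + w + w ^ 2 * p := by rw [hexp, hp]; ring
  have hw2 : 0 < w ^ 2 := by positivity
  have hp0 : 0 < p := pos_of_mul_pos_right (by linarith [add_one_lt_exp hw]) hw2.le
  have hq0 : 0 < q := by
    have h : (1 - w) * exp w < 1 := by
      have := mul_lt_mul_of_pos_right (add_one_lt_exp (neg_ne_zero.2 hw)) (exp_pos w)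
      rwa [← exp_add, neg_add_cancel, exp_zero, neg_add_eq_sub] at this
    refine pos_of_mul_pos_right (a := w ^ 2) ?_ hw2.le
    rw [hE] at h
    rw [hq]
    nlinarith
  have hwp : 1 + w * p ≠ 0 := fun h => hw <| exp_eq_one_iff w |>.1 <| by
    rw [hE]; linear_combination w * h
  have hB : bernoulliGen w = 1 / (1 + w * p) := by
    rw [bernoulliGen, show exp w - 1 = w * (1 + w * p) by rw [hE]; ring]
    field_simp
  have hX : 1 - bernoulliGen w = w * p / (1 + w * p) := by
    rw [hB]; field_simp; ring
  have hZ : 1 - (bernoulliGen w + w) = -(w * q) / (1 + w * p) := by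
    rw [hB, hq]; field_simp; ring
  have hXZ : (1 - bernoulliGen w) * (1 - (bernoulliGen w + w)) =
      -(w ^ 2 * p * q) / (1 + w * p) ^ 2 := by
    rw [hX, hZ]; field_simp
  refine ⟨hXZ ▸ div_neg_of_neg_of_pos (by simp only [neg_neg_iff_pos]; positivity)
    (by positivity), hXZ, ?_⟩
  rw [hX, hZ]
  field_simp
  rw [hq, hp, xiRemainderPoly]
  ring

lemma tendsto_bernoulliGen_quotients :
    (∀ w ≠ 0, (1 - bernoulliGen w) * (1 - (bernoulliGen w + w)) ≠ 0) ∧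
    Tendsto (fun w => (1 - bernoulliGen w) * (1 - (bernoulliGen w + w))) (𝓝[≠] 0) (𝓝 0) ∧
    Tendsto (fun w => (1 / (1 - bernoulliGen w) + 1 / (1 - (bernoulliGen w + w)) - 2 / 3) /
      ((1 - bernoulliGen w) * (1 - (bernoulliGen w + w)))) (𝓝[≠] 0) (𝓝 (-4 / 135)) := by
  have hs : Tendsto (expTail 5) (𝓝[≠] 0) (𝓝 (1 / 120)) := by
    simpa [Nat.factorial] using tendsto_expTail 5
  have hw : Tendsto (fun w : ℝ => w) (𝓝[≠] 0) (𝓝 0) := nhdsWithin_le_nhds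
  have hlim {G : ℝ → ℝ → ℝ} (hG : Continuous fun x : ℝ × ℝ => G x.1 x.2) :
      Tendsto (fun w => G w (expTail 5 w)) (𝓝[≠] 0) (𝓝 (G 0 (1 / 120))) :=
    (hG.tendsto (0, 1 / 120)).comp (hw.prodMk_nhds hs)
  set p : ℝ → ℝ := fun w => 1 / 2 + w / 6 + w ^ 2 / 24 + w ^ 3 * expTail 5 w
  set q : ℝ → ℝ := fun w => 1 - (1 - w) * p w
  have hp : Tendsto p (𝓝[≠] 0) (𝓝 (1 / 2)) := by
    have := hlim (G := fun w s => 1 / 2 + w / 6 + w ^ 2 / 24 + w ^ 3 * s) (by fun_prop)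
    norm_num at this
    exact this
  have hq : Tendsto q (𝓝[≠] 0) (𝓝 (1 / 2)) := by
    have : Tendsto q (𝓝[≠] 0) (𝓝 (1 - (1 - 0) * (1 / 2))) :=
      tendsto_const_nhds.sub ((tendsto_const_nhds.sub hw).mul hp)
    norm_num at this
    exact this
  have hwp : Tendsto (fun w => 1 + w * p w) (𝓝[≠] 0) (𝓝 1) := by
    simpa using tendsto_const_nhds.add (hw.mul hp)
  have hK := hlim (G := xiRemainderPoly) (by unfold xiRemainderPoly; fun_prop)
  rw [show xiRemainderPoly 0 (1 / 120) = 1 / 540 by norm_num [xiRemainderPoly]] at hK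
  have hexp (w : ℝ) (hw0 : w ≠ 0) := bernoulliGen_expansion hw0
    (by simp [exp_eq_sum_add_expTail 5 hw0, Finset.sum_range_succ, Nat.factorial]) rfl
    (rfl : q w = _)
  refine ⟨fun w hw0 => (hexp w hw0).1.ne, ?_, ?_⟩
  · have : Tendsto (fun w => -(w ^ 2 * p w * q w) / (1 + w * p w) ^ 2) (𝓝[≠] 0)
        (𝓝 (-(0 ^ 2 * (1 / 2) * (1 / 2)) / 1 ^ 2)) :=
      ((hw.pow 2).mul hp |>.mul hq).neg.div (hwp.pow 2) (by norm_num)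
    rw [show (-(0 ^ 2 * (1 / 2) * (1 / 2)) / 1 ^ 2 : ℝ) = 0 by norm_num] at this
    exact this.congr' (by filter_upwards [self_mem_nhdsWithin] with w hw0
      using (hexp w hw0).2.1.symm)
  · have : Tendsto
        (fun w => -xiRemainderPoly w (expTail 5 w) * (1 + w * p w) ^ 2 / (p w * q w) ^ 2) (𝓝[≠] 0)
        (𝓝 (-(1 / 540) * 1 ^ 2 / (1 / 2 * (1 / 2)) ^ 2)) :=
      (hK.neg.mul (hwp.pow 2)).div ((hp.mul hq).pow 2) (by norm_num)
    rw [show (-(1 / 540) * 1 ^ 2 / (1 / 2 * (1 / 2)) ^ 2 : ℝ) = -4 / 135 by norm_num] at this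
    exact this.congr' (by filter_upwards [self_mem_nhdsWithin] with w hw0
      using (hexp w hw0).2.2.symm)

lemma exp_neg_eq_bernoulliGen {x y : ℝ} (h : exp (-x) + x = exp (-y) + y) (hxy : x ≠ y) :
    exp (-x) = bernoulliGen (x - y) ∧ exp (-y) = bernoulliGen (x - y) + (x - y) := by
  have hw : exp (x - y) - 1 ≠ 0 := by
    rw [sub_ne_zero, Ne, exp_eq_one_iff, sub_eq_zero]
    exact hxy
  have hmul : exp (-y) = exp (-x) * exp (x - y) := by rw [← exp_add]; ring_nf
  have hx : exp (-x) = bernoulliGen (x - y) := by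
    rw [bernoulliGen, eq_div_iff hw, mul_sub, mul_one, ← hmul]
    linarith
  exact ⟨hx, by linarith⟩

lemma tendsto_xi_bernoulliGen :
    Tendsto (fun w => 1 / (1 - bernoulliGen w) + 1 / (1 - (bernoulliGen w + w))) (𝓝[≠] 0)
      (𝓝 (2 / 3)) ∧
    Tendsto (fun w => -(bernoulliGen w / (1 - bernoulliGen w) ^ 3 +
      (bernoulliGen w + w) / (1 - (bernoulliGen w + w)) ^ 3)) (𝓝[≠] 0) (𝓝 (8 / 135)) := by
  obtain ⟨hne, h0, hc⟩ := tendsto_bernoulliGen_quotients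
  have := tendsto_sum_inv_one_sub_of_tendsto_div
    (by filter_upwards [self_mem_nhdsWithin] with w hw using hne w hw) h0 hc
  rw [show (4 / 27 + 3 * (-4 / 135) : ℝ) = 8 / 135 by norm_num] at this
  exact this

/-- `lim_{t→1+} ξ(t) = 2/3` and `lim_{t→1+} ξ'(t) = 8/135`, where
`u t ≤ 0 ≤ v t` are the two solutions of `e^{-s} + s = t` for `t ≥ 1`,
`ξ(t) = 1/(1 − e^{-v t}) + 1/(1 − e^{-u t})` for `t > 1`, and `ξ'` is the derivative of
`ξ` on `(1,∞)`. -/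
theorem xi_limits_at_one (u v ξ ξ' : ℝ → ℝ)
    (hu : ∀ t ≥ (1:ℝ), u t ≤ 0 ∧ Real.exp (-(u t)) + u t = t)
    (hv : ∀ t ≥ (1:ℝ), 0 ≤ v t ∧ Real.exp (-(v t)) + v t = t)
    (hξ : ∀ t > (1:ℝ),
      ξ t = 1/(1 - Real.exp (-(v t))) + 1/(1 - Real.exp (-(u t))))
    (hξ' : ∀ t > (1:ℝ), HasDerivAt ξ (ξ' t) t) :
    Tendsto ξ (nhdsWithin 1 (Set.Ioi 1)) (nhds (2/3)) ∧
      Tendsto ξ' (nhdsWithin 1 (Set.Ioi 1)) (nhds (8/135)) := by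
  obtain ⟨hv0, hvt⟩ := nonnegRoot_tendsto_pos_continuousAt hv
  obtain ⟨hu0, hut⟩ := nonposRoot_tendsto_neg_continuousAt hu
  have hw : Tendsto (fun t => v t - u t) (𝓝[>] 1) (𝓝[≠] 0) :=
    tendsto_nhdsWithin_iff.2 ⟨by simpa using hv0.sub hu0, eventually_nhdsWithin_of_forall
      fun t ht => sub_ne_zero.2 ((hut t ht).1.trans (hvt t ht).1).ne'⟩
  have hgap (t : ℝ) (ht : 1 < t) := exp_neg_eq_bernoulliGen
    ((hv t ht.le).2.trans (hu t ht.le).2.symm) ((hut t ht).1.trans (hvt t ht).1).ne'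
  have hderiv (t : ℝ) (ht : 1 < t) :
      ξ' t = -(exp (-v t) / (1 - exp (-v t)) ^ 3 + exp (-u t) / (1 - exp (-u t)) ^ 3) := by
    have hroots : ∀ᶠ y in 𝓝 t, exp (-v y) + v y = y ∧ exp (-u y) + u y = y :=
      (eventually_gt_nhds ht).mono fun y hy => ⟨(hv y hy.le).2, (hu y hy.le).2⟩
    have hsum := (hasDerivAt_one_div_one_sub_exp_neg (hvt t ht).2 (hvt t ht).1.ne'
      (hroots.mono fun _ h => h.1)).add (hasDerivAt_one_div_one_sub_exp_neg (hut t ht).2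
      (hut t ht).1.ne (hroots.mono fun _ h => h.2))
    rw [(hξ' t ht).unique (hsum.congr_of_eventuallyEq
      ((eventually_gt_nhds ht).mono fun y hy => hξ y hy)), neg_add]
  obtain ⟨hlim, hlim'⟩ := tendsto_xi_bernoulliGen
  refine ⟨(hlim.comp hw).congr' ?_, (hlim'.comp hw).congr' ?_⟩ <;>
    filter_upwards [self_mem_nhdsWithin] with t (ht : 1 < t)
  · rw [Function.comp_apply, hξ t ht, (hgap t ht).1, (hgap t ht).2]
  · rw [Function.comp_apply, hderiv t ht, (hgap t ht).1, (hgap t ht).2]
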